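/- arXiv:1204.5631 — 2 statements merged into one kernel-verified Lean document; each statement's English description precedes it below -/
import Mathlib

section
/- The Erdős–Rado tree is binary branching: call i an immediate successor of k if k ≺ i and there is no l with k ≺ l ≺ i. If i and j are distinct immediate successors of k then c k i ≠ c k j; consequently every k ∈ ℕ has at most two immediate successors with respect to ≺. -/
/-- The Erdős–Rado relation `≺` on ℕ determined by the symmetric colouring `c`:
`j ≺ i` iff `j < i` and `c k i = c k j` for every `k ≺ j`. -/
def ERprec (c : ℕ → ℕ → Bool) (j i : ℕ) : Prop :=
  ∃ _ : j < i, ∀ k, ERprec c k j → c k i = c k j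
termination_by i
decreasing_by omega

/-- `Tp c s k` is the predicate `T'(s, k)`: there is `k'` with `|s| ≤ k' ≤ k` such that
`s` is the characteristic function (with `0 = false`) of the `≺`-predecessors of `k'`
below `|s|`. -/
def Tp (c : ℕ → ℕ → Bool) (s : List Bool) (k : ℕ) : Prop :=
  ∃ k', s.length ≤ k' ∧ k' ≤ k ∧ ∀ i (h : i < s.length), (s[i]'h = false ↔ ERprec c i k')

/-- `TB c β s` is `T^β(s) := T'(s, β |s|)`. -/
def TB (c : ℕ → ℕ → Bool) (β : ℕ → ℕ) (s : List Bool) : Prop :=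
  Tp c s (β s.length)

/-- `β` is an ideal Skolem function for `T` if `T'(s,k) → T'(s, β |s|)` for all `s`, `k`. -/
def IdealSkolem (c : ℕ → ℕ → Bool) (β : ℕ → ℕ) : Prop :=
  ∀ (s : List Bool) (k : ℕ), Tp c s k → Tp c s (β s.length)

/-- `Depth c β s n` is `Depth_n(T^β_s)`: the subtree of `T^β` at `s` has a branch of
length `n`. -/
def Depth (c : ℕ → ℕ → Bool) (β : ℕ → ℕ) (s : List Bool) (n : ℕ) : Prop :=
  ∃ t : List Bool, t.length = n ∧ TB c β (s ++ t)

/-- `i` is an immediate successor of `k` in the Erdős–Rado tree. -/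
def ImmSucc (c : ℕ → ℕ → Bool) (k i : ℕ) : Prop :=
  ERprec c k i ∧ ¬ ∃ l, ERprec c k l ∧ ERprec c l i

lemma ERprec_iff (c : ℕ → ℕ → Bool) (j i : ℕ) :
    ERprec c j i ↔ j < i ∧ ∀ k, ERprec c k j → c k i = c k j := by
  rw [ERprec]; exact exists_prop ..

lemma ERprec_trans (c : ℕ → ℕ → Bool) :
    ∀ m l j, ERprec c l m → ERprec c m j → ERprec c l j := by
  intro m
  induction m using Nat.strong_induction_on with
  | _ m ih =>
    intro l j hlm hmj
    rw [ERprec_iff] at hlm hmj ⊢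
    refine ⟨hlm.1.trans hmj.1, fun p hp => ?_⟩
    have hpm : ERprec c p m := ih l hlm.1 p m hp ((ERprec_iff ..).2 hlm)
    rw [hmj.2 p hpm, ← hlm.2 p hp]

lemma ERprec_comp (c : ℕ → ℕ → Bool) :
    ∀ m j k, ERprec c m j → ERprec c k j → m < k → ERprec c m k := by
  intro m
  induction m using Nat.strong_induction_on with
  | _ m ih =>
    intro j k hmj hkj hmk
    rw [ERprec_iff]
    refine ⟨hmk, fun l hl => ?_⟩
    have hllt : l < m := ((ERprec_iff ..).1 hl).1
    have hlj : ERprec c l j := ERprec_trans c m l j hl hmj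
    have hlk : ERprec c l k := ih l hllt j k hlj hkj (hllt.trans hmk)
    rw [← ((ERprec_iff ..).1 hkj).2 l hlk, ((ERprec_iff ..).1 hmj).2 l hl]

/-- The Erdős–Rado tree is binary branching: distinct immediate successors of `k` get
different colours relative to `k`; consequently every node has at most two immediate
successors. -/
theorem erdos_rado_binary_branching (c : ℕ → ℕ → Bool) (hc : ∀ i j, c i j = c j i) :
    (∀ k i j : ℕ, ImmSucc c k i → ImmSucc c k j → i ≠ j → c k i ≠ c k j) ∧
    (∀ k i j l : ℕ, ImmSucc c k i → ImmSucc c k j → ImmSucc c k l →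
      i = j ∨ i = l ∨ j = l) := by
  have main : ∀ k i j : ℕ, ImmSucc c k i → ImmSucc c k j → i ≠ j → c k i ≠ c k j := by
    have key : ∀ k i j : ℕ, ImmSucc c k i → ImmSucc c k j → j < i → c k i ≠ c k j := by
      intro k i j hi hj hji heq
      have hji' : ERprec c j i := by
        rw [ERprec_iff]
        refine ⟨hji, fun m hm => ?_⟩
        rcases lt_trichotomy m k with h | rfl | h
        · have hmk : ERprec c m k := ERprec_comp c m j k hm hj.1 h
          rw [((ERprec_iff ..).1 hi.1).2 m hmk, ((ERprec_iff ..).1 hj.1).2 m hmk]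
        · exact heq
        · exact absurd ⟨m, ERprec_comp c k j m hj.1 hm h, hm⟩ hj.2
      exact hi.2 ⟨j, hj.1, hji'⟩
    intro k i j hi hj hij
    rcases lt_or_gt_of_ne hij with h | h
    · exact fun heq => key k j i hj hi h heq.symm
    · exact key k i j hi hj h
  refine ⟨main, fun k i j l hi hj hl => ?_⟩
  by_contra h
  push_neg at h
  obtain ⟨h1, h2, h3⟩ := h
  have e1 := main k i j hi hj h1
  have e2 := main k i l hi hl h2
  have e3 := main k j l hj hl h3
  rcases Bool.dichotomy (c k i) with hx | hx <;>
    rcases Bool.dichotomy (c k j) with hy | hy <;>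
      rcases Bool.dichotomy (c k l) with hz | hz <;> simp_all
end

section
/- Main theorem on the explicitly controlled product: let E be an explicitly controlled product of the selection functions ε_s for ω, let q : (ℕ → X) → R, set α = E ⟨⟩ q (where ⟨⟩ is the empty sequence), and for a finite sequence t over X define p_t : X → R by p_t(x) = q_{t * x}(E (t * x) q_{t * x}). Then for every n ≤ ω α: α n = ε_{α|n}(p_{α|n}) and q α = p_{α|n}(α n) = p_{α|n}(ε_{α|n}(p_{α|n})). -/
/-- Prepend a single element to an infinite sequence. -/
def consSeq {X : Type*} (x : X) (α : ℕ → X) : ℕ → X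
  | 0 => x
  | n + 1 => α n

/-- The canonical infinite extension `ŝ` of a finite sequence `s` by the distinguished
element `z`. -/
def extSeq {X : Type*} (z : X) (s : List X) : ℕ → X :=
  fun n => s.getD n z

/-- Concatenation `t * α` of a finite sequence `t` with an infinite sequence `α`. -/
def prependSeq {X : Type*} (t : List X) (α : ℕ → X) : ℕ → X :=
  fun n => t.getD n (α (n - t.length))

/-- The initial segment `α|n` of the infinite sequence `α`, of length `n`. -/
def initSeg {X : Type*} (α : ℕ → X) (n : ℕ) : List X :=
  (List.range n).map α

/-- `IsECP z ε ω E` says that `E` is an explicitly controlled product of the selection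
functions `ε_s : (X → R) → X` for the control functional `ω`:  `E s q = 0` (the constant
`z` sequence) if `ω ŝ < |s|`, and otherwise `E s q = a * E (s * a) q_a` where
`a = ε_s (fun x => q_x (E (s * x) q_x))` and `q_x α = q (x * α)`. -/
def IsECP {X R : Type*} (z : X) (ε : List X → (X → R) → X) (ω : (ℕ → X) → ℕ)
    (E : List X → ((ℕ → X) → R) → ℕ → X) : Prop :=
  ∀ (s : List X) (q : (ℕ → X) → R),
    (ω (extSeq z s) < s.length → E s q = fun _ => z) ∧
    (¬ ω (extSeq z s) < s.length →
      E s q =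
        (let a := ε s (fun x => q (consSeq x (E (s ++ [x]) (fun α => q (consSeq x α)))));
         consSeq a (E (s ++ [a]) (fun α => q (consSeq a α)))))

/-- `pSel E q t x = q_(t * x) (E (t * x) q_(t * x))`: the outcome of playing `x` at
position `t`, assuming optimal play afterwards. -/
def pSel {X R : Type*} (E : List X → ((ℕ → X) → R) → ℕ → X) (q : (ℕ → X) → R)
    (t : List X) (x : X) : R :=
  q (prependSeq (t ++ [x]) (E (t ++ [x]) (fun β => q (prependSeq (t ++ [x]) β))))

lemma prependSeq_nil {X : Type*} (β : ℕ → X) : prependSeq [] β = β := by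
  funext k; simp [prependSeq]

lemma prependSeq_consSeq {X : Type*} (t : List X) (x : X) (β : ℕ → X) :
    prependSeq t (consSeq x β) = prependSeq (t ++ [x]) β := by
  funext k
  induction t generalizing k with
  | nil => cases k <;> simp [prependSeq, consSeq]
  | cons h tl ih =>
    cases k with
    | zero => simp [prependSeq]
    | succ m => simpa [prependSeq, List.getD] using ih m

lemma prependSeq_const {X : Type*} (t : List X) (z : X) :
    prependSeq t (fun _ => z) = extSeq z t := rfl

lemma prependSeq_at_length {X : Type*} (t : List X) (β : ℕ → X) :
    prependSeq t β t.length = β 0 := by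
  simp [prependSeq, List.getD_eq_default]

lemma initSeg_succ {X : Type*} (α : ℕ → X) (n : ℕ) :
    initSeg α (n + 1) = initSeg α n ++ [α n] := by
  simp [initSeg, List.range_succ]

lemma initSeg_length {X : Type*} (α : ℕ → X) (n : ℕ) :
    (initSeg α n).length = n := by simp [initSeg]

lemma ecp_step {X R : Type*} (z : X) (ε : List X → (X → R) → X) (ω : (ℕ → X) → ℕ)
    (E : List X → ((ℕ → X) → R) → ℕ → X) (hE : IsECP z ε ω E) (q : (ℕ → X) → R)
    (s : List X) (h : ¬ ω (extSeq z s) < s.length) :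
    E s (fun β => q (prependSeq s β)) =
      consSeq (ε s (pSel E q s))
        (E (s ++ [ε s (pSel E q s)])
          (fun β => q (prependSeq (s ++ [ε s (pSel E q s)]) β))) := by
  have h2 := (hE s (fun β => q (prependSeq s β))).2 h
  simp only at h2
  have key : ∀ x : X, (fun γ => q (prependSeq s (consSeq x γ)))
      = (fun γ => q (prependSeq (s ++ [x]) γ)) := by
    intro x; funext γ; rw [prependSeq_consSeq]
  have key2 : (fun x => q (prependSeq s (consSeq x
      (E (s ++ [x]) (fun γ => q (prependSeq (s ++ [x]) γ)))))) = pSel E q s := by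
    funext x; rw [prependSeq_consSeq]; rfl
  rw [h2]
  simp only [key, key2]

lemma ecp_inv {X R : Type*} (z : X) (ε : List X → (X → R) → X) (ω : (ℕ → X) → ℕ)
    (E : List X → ((ℕ → X) → R) → ℕ → X) (hE : IsECP z ε ω E) (q : (ℕ → X) → R) :
    ∀ n, n ≤ ω (E [] q) →
      E [] q = prependSeq (initSeg (E [] q) n)
        (E (initSeg (E [] q) n) (fun β => q (prependSeq (initSeg (E [] q) n) β))) := by
  intro n
  induction n with
  | zero =>
    intro _
    have hq : (fun β => q (prependSeq ([] : List X) β)) = q := by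
      funext β; rw [prependSeq_nil]
    simp only [initSeg, List.range_zero, List.map_nil, hq, prependSeq_nil]
  | succ n ih =>
    intro hn
    have Pn := ih (Nat.le_of_succ_le hn)
    set s := initSeg (E [] q) n with hs
    by_cases h : ω (extSeq z s) < s.length
    · exfalso
      have h1 := (hE s (fun β => q (prependSeq s β))).1 h
      have h2 : E [] q = extSeq z s := by rw [Pn, h1, prependSeq_const]
      rw [h2] at hn
      rw [initSeg_length] at h
      omega
    · have step := ecp_step z ε ω E hE q s h
      have hαn : E [] q n = ε s (pSel E q s) := by
        conv_lhs => rw [Pn, step]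
        rw [show n = s.length from (initSeg_length _ _).symm, prependSeq_at_length]
        rfl
      have hseg : initSeg (E [] q) (n + 1) = s ++ [ε s (pSel E q s)] := by
        rw [initSeg_succ, hαn]
      rw [hseg]
      conv_lhs => rw [Pn, step, prependSeq_consSeq]

/-- Main theorem on the explicitly controlled product: with `α = E ⟨⟩ q`, for every
`n ≤ ω α` we have `α n = ε_(α|n) (p_(α|n))` and
`q α = p_(α|n) (α n) = p_(α|n) (ε_(α|n) (p_(α|n)))`. -/
theorem ecp_main_theorem {X R : Type*} (z : X) (ε : List X → (X → R) → X)
    (ω : (ℕ → X) → ℕ) (E : List X → ((ℕ → X) → R) → ℕ → X) (hE : IsECP z ε ω E)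
    (q : (ℕ → X) → R) (n : ℕ) (hn : n ≤ ω (E [] q)) :
    E [] q n = ε (initSeg (E [] q) n) (pSel E q (initSeg (E [] q) n)) ∧
    q (E [] q) = pSel E q (initSeg (E [] q) n) (E [] q n) ∧
    q (E [] q) = pSel E q (initSeg (E [] q) n)
      (ε (initSeg (E [] q) n) (pSel E q (initSeg (E [] q) n))) := by
  have Pn := ecp_inv z ε ω E hE q n hn
  set s := initSeg (E [] q) n with hs
  by_cases h : ω (extSeq z s) < s.length
  · exfalso
    have h1 := (hE s (fun β => q (prependSeq s β))).1 h
    have h2 : E [] q = extSeq z s := by rw [Pn, h1, prependSeq_const]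
    rw [h2] at hn
    rw [initSeg_length] at h
    omega
  · have step := ecp_step z ε ω E hE q s h
    have hαn : E [] q n = ε s (pSel E q s) := by
      conv_lhs => rw [Pn, step]
      rw [show n = s.length from (initSeg_length _ _).symm, prependSeq_at_length]
      rfl
    have hqα : q (E [] q) = pSel E q s (ε s (pSel E q s)) := by
      conv_lhs => rw [Pn, step, prependSeq_consSeq]
      rfl
    exact ⟨hαn, by rw [hαn]; exact hqα, hqα⟩
end
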